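/- arXiv:1505.01770 — 4 statements merged into one kernel-verified Lean document; each statement's English description precedes it below -/
import Mathlib

section
/- For all natural numbers n, the sum f(n)² + f(n+1)² + f(n+2)² + f(n+3)² + f(n+4)² + f(n+5)² + f(n+6)² + f(n+7)² = 21·f(2n+7), where f is the Fibonacci sequence. -/
lemma fib_key (m : ℕ) :
    Nat.fib m + Nat.fib (m + 4) + Nat.fib (m + 8) + Nat.fib (m + 12) =
      21 * Nat.fib (m + 6) := by
  have h : ∀ k, Nat.fib (m + k + 2) = Nat.fib (m + k) + Nat.fib (m + k + 1) :=
    fun k => Nat.fib_add_two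
  have h0 := h 0; have h1 := h 1; have h2 := h 2; have h3 := h 3
  have h4 := h 4; have h5 := h 5; have h6 := h 6; have h7 := h 7
  have h8 := h 8; have h9 := h 9; have h10 := h 10
  simp only [Nat.add_zero, Nat.add_assoc] at h0 h1 h2 h3 h4 h5 h6 h7 h8 h9 h10
  norm_num at h0 h1 h2 h3 h4 h5 h6 h7 h8 h9 h10
  omega

theorem sum_eight_fib_sq (n : ℕ) :
    Nat.fib n ^ 2 + Nat.fib (n + 1) ^ 2 + Nat.fib (n + 2) ^ 2 + Nat.fib (n + 3) ^ 2 +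
      Nat.fib (n + 4) ^ 2 + Nat.fib (n + 5) ^ 2 + Nat.fib (n + 6) ^ 2 + Nat.fib (n + 7) ^ 2 =
      21 * Nat.fib (2 * n + 7) := by
  have e0 := Nat.fib_two_mul_add_one n
  have e2 := Nat.fib_two_mul_add_one (n + 2)
  have e4 := Nat.fib_two_mul_add_one (n + 4)
  have e6 := Nat.fib_two_mul_add_one (n + 6)
  have key := fib_key (2 * n + 1)
  have r2 : 2 * (n + 2) + 1 = 2 * n + 1 + 4 := by ring
  have r4 : 2 * (n + 4) + 1 = 2 * n + 1 + 8 := by ring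
  have r6 : 2 * (n + 6) + 1 = 2 * n + 1 + 12 := by ring
  have r7 : 2 * n + 7 = 2 * n + 1 + 6 := by ring
  rw [r2] at e2; rw [r4] at e4; rw [r6] at e6; rw [r7]
  simp only [show n + 2 + 1 = n + 3 from rfl, show n + 4 + 1 = n + 5 from rfl,
    show n + 6 + 1 = n + 7 from rfl] at e2 e4 e6
  omega
end

section
/- For every real number a and natural number n, the quantity f(n)² + (a+1)f(n+1)² + (2a+1)f(n+2)² + (a+1)(2a+1)f(n+3)² + (3a+1)f(n+4)² + (a+1)(3a+1)f(n+5)² + (2a+1)(3a+1)f(n+6)² + (a+1)(2a+1)(3a+1)f(n+7)² equals f(2n+6)·(79a² + 46a + (174a³−4a)/5) + f(2n+7)·(130a² + 84a + 21 + (282a³+8a)/5) + (−1)ⁿ·(4a² + (12a³+8a)/5), where f is the Fibonacci sequence (viewed in ℝ). -/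
lemma cassini_real (n : ℕ) :
    ((Nat.fib (n+1) : ℝ))^2 - (Nat.fib n : ℝ) * (Nat.fib (n+2) : ℝ) = (-1 : ℝ)^n := by
  induction n with
  | zero => simp
  | succ m ih =>
    have c1 : ((Nat.fib (m+2)) : ℝ) = Nat.fib (m+1) + Nat.fib m := by
      rw [Nat.fib_add_two]; push_cast; ring
    have c2 : ((Nat.fib (m+3)) : ℝ) = Nat.fib (m+2) + Nat.fib (m+1) := by
      rw [show m+3 = m+1+2 by ring, Nat.fib_add_two]; push_cast; ring
    rw [show m+1+1 = m+2 from rfl, show m+1+2 = m+3 from rfl, c2, pow_succ]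
    linear_combination (-1 : ℝ) * ih + ((Nat.fib (m+2)) : ℝ) * c1

theorem norm_fibonacci_octonion (a : ℝ) (n : ℕ) :
    (Nat.fib n : ℝ) ^ 2 + (a + 1) * (Nat.fib (n + 1) : ℝ) ^ 2 +
      (2 * a + 1) * (Nat.fib (n + 2) : ℝ) ^ 2 +
      (a + 1) * (2 * a + 1) * (Nat.fib (n + 3) : ℝ) ^ 2 +
      (3 * a + 1) * (Nat.fib (n + 4) : ℝ) ^ 2 +
      (a + 1) * (3 * a + 1) * (Nat.fib (n + 5) : ℝ) ^ 2 +
      (2 * a + 1) * (3 * a + 1) * (Nat.fib (n + 6) : ℝ) ^ 2 +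
      (a + 1) * (2 * a + 1) * (3 * a + 1) * (Nat.fib (n + 7) : ℝ) ^ 2 =
      (Nat.fib (2 * n + 6) : ℝ) * (79 * a ^ 2 + 46 * a + (174 * a ^ 3 - 4 * a) / 5) +
      (Nat.fib (2 * n + 7) : ℝ) * (130 * a ^ 2 + 84 * a + 21 + (282 * a ^ 3 + 8 * a) / 5) +
      (-1 : ℝ) ^ n * (4 * a ^ 2 + (12 * a ^ 3 + 8 * a) / 5) := by
  have H6 : Nat.fib (2*n+6) = Nat.fib (n+2) * Nat.fib (n+3) + Nat.fib (n+3) * Nat.fib (n+4) := by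
    rw [show 2*n+6 = (n+2)+(n+3)+1 by ring, Nat.fib_add]
  have H7 : Nat.fib (2*n+7) = Nat.fib (n+3) * Nat.fib (n+3) + Nat.fib (n+4) * Nat.fib (n+4) := by
    rw [show 2*n+7 = (n+3)+(n+3)+1 by ring, Nat.fib_add]
  have h : ∀ k, Nat.fib (n+k+2) = Nat.fib (n+k+1) + Nat.fib (n+k) := fun k => by
    rw [Nat.fib_add_two]; ring
  have h2 : Nat.fib (n+2) = Nat.fib (n+1) + Nat.fib n := h 0
  have h3 : Nat.fib (n+3) = Nat.fib (n+2) + Nat.fib (n+1) := h 1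
  have h4 : Nat.fib (n+4) = Nat.fib (n+3) + Nat.fib (n+2) := h 2
  have h5 : Nat.fib (n+5) = Nat.fib (n+4) + Nat.fib (n+3) := h 3
  have h6 : Nat.fib (n+6) = Nat.fib (n+5) + Nat.fib (n+4) := h 4
  have h7 : Nat.fib (n+7) = Nat.fib (n+6) + Nat.fib (n+5) := h 5
  rw [H6, H7, h7, h6, h5, h4, h3, h2]
  have h2' : ((Nat.fib (n+2)) : ℝ) = Nat.fib (n+1) + Nat.fib n := by rw [h2]; push_cast; ring
  push_cast
  linear_combination (4 * a ^ 2 + (12 * a ^ 3 + 8 * a) / 5) * cassini_real n +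
    (4 * a ^ 2 + (12 * a ^ 3 + 8 * a) / 5) * (Nat.fib n : ℝ) * h2'
end

section
/- For every real number a with a ≤ −2 and every natural number n, the expression f(2n+6)·(174a³+395a²+226a)/5 + f(2n+7)·(282a³+650a²+428a+105)/5 + (−1)ⁿ·(12a³+20a²+8a)/5 is strictly negative; in particular, the norm of every Fibonacci octonion in the generalized octonion algebra O_ℝ(a+1, 2a+1, 3a+1) is nonzero, so all Fibonacci octonions are invertible in this algebra. -/
/-!
Write the expression as `(f(2n+6) P + f(2n+7) Q + (-1)ⁿ R) / 5`. For `a ≤ -2` the cubic `Q` is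
negative, and `|R| < -P`; since `f(2n+6) ≥ 1`, the first term alone already outweighs the
alternating one.
-/

lemma mul_add_mul_add_mul_neg_of_abs_lt {u v s p q r : ℝ} (hu : 1 ≤ u) (hv : 0 ≤ v)
    (hq : q ≤ 0) (hs : |s| ≤ 1) (hr : |r| < -p) : u * p + v * q + s * r < 0 := by
  have hup : u * p ≤ p := by nlinarith [abs_nonneg r]
  have hvq : v * q ≤ 0 := mul_nonpos_of_nonneg_of_nonpos hv hq
  have hsr : s * r ≤ |r| :=
    calc s * r ≤ |s| * |r| := by rw [← abs_mul]; exact le_abs_self _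
      _ ≤ |r| := mul_le_of_le_one_left (abs_nonneg r) hs
  linarith

lemma cubic_neg_of_le_neg_two {a : ℝ} (ha : a ≤ -2) :
    282 * a ^ 3 + 650 * a ^ 2 + 428 * a + 105 < 0 := by
  -- `Q(a) = (a + 2)(282a² + 86a + 256) - 407`, and the quadratic factor has no real roots.
  nlinarith [mul_nonpos_of_nonneg_of_nonpos (by nlinarith : (0 : ℝ) ≤ 282 * a ^ 2 + 86 * a + 256)
    (by linarith : a + 2 ≤ 0)]

lemma abs_cubic_lt_neg_cubic_of_le_neg_two {a : ℝ} (ha : a ≤ -2) :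
    |12 * a ^ 3 + 20 * a ^ 2 + 8 * a| < -(174 * a ^ 3 + 395 * a ^ 2 + 226 * a) := by
  -- `P - R = a(162a² + 375a + 218)` and `P + R = a(186a² + 415a + 234)`, with definite quadratics.
  rw [abs_lt]
  constructor <;> nlinarith [sq_nonneg (a + 2), mul_nonpos_of_nonneg_of_nonpos (sq_nonneg (a + 2))
    (by linarith : a + 2 ≤ 0)]

theorem norm_fibonacci_octonion_neg (a : ℝ) (ha : a ≤ -2) (n : ℕ) :
    (Nat.fib (2 * n + 6) : ℝ) * (174 * a ^ 3 + 395 * a ^ 2 + 226 * a) / 5 +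
      (Nat.fib (2 * n + 7) : ℝ) * (282 * a ^ 3 + 650 * a ^ 2 + 428 * a + 105) / 5 +
      (-1 : ℝ) ^ n * (12 * a ^ 3 + 20 * a ^ 2 + 8 * a) / 5 < 0 := by
  rw [← add_div, ← add_div]
  refine div_neg_of_neg_of_pos ?_ (by norm_num)
  refine mul_add_mul_add_mul_neg_of_abs_lt ?_ (Nat.cast_nonneg _)
    (cubic_neg_of_le_neg_two ha).le (by simp) (abs_cubic_lt_neg_cubic_of_le_neg_two ha)
  exact_mod_cast Nat.fib_pos.mpr (by omega)
end

section
/- For all natural numbers n, −1144·f(2n+6) − 1851·f(2n+7) − 96·(−1)ⁿ < 0, where f is the Fibonacci sequence; hence every Fibonacci octonion in the split octonion algebra O_ℝ(−3, −7, −11) is invertible. -/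
theorem norm_fibonacci_octonion_neg_case (n : ℕ) :
    -1144 * (Nat.fib (2 * n + 6) : ℤ) - 1851 * (Nat.fib (2 * n + 7) : ℤ) -
      96 * (-1 : ℤ) ^ n < 0 := by
  have h1 : (8 : ℤ) ≤ Nat.fib (2 * n + 6) := by
    have := Nat.fib_mono (show 6 ≤ 2 * n + 6 by omega)
    simp [Nat.fib] at this ⊢; exact_mod_cast this
  have h2 : (0 : ℤ) ≤ Nat.fib (2 * n + 7) := by positivity
  rcases neg_one_pow_eq_or ℤ n with h | h <;> rw [h] <;> nlinarith
end
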